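/- Let ρ > 1. Then there exists a weight ω = (ωₙ)_{n∈ℤ} on ℤ satisfying lim_{n→∞} ωₙ^{1/n} = ρ and lim_{n→∞} ω₋ₙ^{−1/n} < 1, but such that the sequence (ωₙ)_{n∈ℕ} is not tail-preserving. -/

import Mathlib

noncomputable section

open Filter

/-- The tail `∑_{j=n+1}^∞ x_j` of a sequence, in 0-indexed form. -/
def tailFrom (x : ℕ → ℂ) (n : ℕ) : ℂ := ∑' j : ℕ, x (n + 1 + j)

/-- A sequence `τ` in `[1,∞)` is tail-preserving if for every complex sequence `x` with
`∑ τₙ|xₙ| < ∞` one has `∑ τₙ|∑_{j>n} x_j| < ∞`.  (0-indexed: `τ n` is the paper's `τ_{n+1}`.) -/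
def TailPreserving (τ : ℕ → ℝ) : Prop :=
  ∀ x : ℕ → ℂ, Summable (fun n => τ n * ‖x n‖) →
    Summable (fun n => τ n * ‖tailFrom x n‖)

/-- A weight on the additive group `ℤ`: a function `ω : ℤ → [1,∞)` with `ω 0 = 1`
which is submultiplicative. -/
def IsWeightInt (ω : ℤ → ℝ) : Prop :=
  (∀ n, 1 ≤ ω n) ∧ ω 0 = 1 ∧ ∀ m n, ω (m + n) ≤ ω m * ω n

section Aux

/-- base-4 digit sum -/
def r4 (n : ℕ) : ℕ := (Nat.digits 4 n).sum

lemma r4_zero : r4 0 = 0 := by simp [r4]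

lemma r4_one : r4 1 = 1 := by simp [r4]

lemma r4_rec (n : ℕ) : r4 n = n % 4 + r4 (n / 4) := by
  rcases Nat.eq_zero_or_pos n with h | h
  · simp [h, r4]
  · rw [r4, Nat.digits_def' (by norm_num) h]; rfl

lemma r4_subadd : ∀ m n : ℕ, r4 (m + n) ≤ r4 m + r4 n := by
  intro m n
  induction' hi : m + n using Nat.strong_induction_on with s IH generalizing m n
  subst hi
  rcases Nat.eq_zero_or_pos m with hm | hm
  · simp [hm]
  rcases Nat.eq_zero_or_pos n with hn | hn
  · simp [hn]
  have key : (m + n) / 4 = m / 4 + n / 4 + (m % 4 + n % 4) / 4 := by omega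
  set c := (m % 4 + n % 4) / 4 with hc
  have hc1 : c ≤ 1 := by omega
  have hrc : r4 c ≤ c := by
    interval_cases c
    · simp [r4_zero]
    · simp [r4_one]
  have h1 : r4 ((m+n)/4) ≤ r4 (m/4) + r4 (n/4) + c := by
    rw [key]
    calc r4 (m / 4 + n / 4 + c)
        ≤ r4 (m / 4 + n / 4) + r4 c := IH _ (by omega) _ _ rfl
      _ ≤ r4 (m/4) + r4 (n/4) + r4 c := by
          have : r4 (m / 4 + n / 4) ≤ r4 (m/4) + r4 (n/4) := IH _ (by omega) _ _ rfl
          omega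
      _ ≤ r4 (m/4) + r4 (n/4) + c := by omega
  have e1 := r4_rec (m + n)
  have e2 := r4_rec m
  have e3 := r4_rec n
  omega

lemma r4_pow (k : ℕ) : r4 (4 ^ k) = 1 := by
  induction k with
  | zero => simpa using r4_one
  | succ k ih =>
      rw [r4_rec]
      have h4 : 4 ^ (k+1) = 4 * 4 ^ k := by ring
      rw [h4]
      simp [Nat.mul_div_cancel_left, Nat.mul_mod_right, ih]

lemma r4_lb : ∀ k t j : ℕ, t ≤ k → 1 ≤ j → j ≤ 4 ^ t → k - t ≤ r4 (4 ^ k - j) := by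
  intro k
  induction k with
  | zero => intro t j ht _ _; omega
  | succ k ih =>
      intro t j ht hj1 hj2
      rcases Nat.eq_or_lt_of_le ht with rfl | ht'
      · omega
      have ht : t ≤ k := by omega
      have hpow : (4:ℕ) ^ t ≤ 4 ^ k := Nat.pow_le_pow_right (by norm_num) ht
      have h4 : (4:ℕ) ^ (k+1) = 4 * 4 ^ k := by ring
      set j' := (j + 3) / 4 with hj'
      have hj'1 : 1 ≤ j' := by omega
      have hj'le : j' ≤ j := by omega
      set x := 4 ^ (k+1) - j with hx
      have hxmod : x % 4 = 4 * j' - j ∧ x / 4 = 4 ^ k - j' := by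
        constructor <;> omega
      rcases Nat.eq_zero_or_pos (j % 4) with hm | hm
      · -- j divisible by 4, so t ≥ 1
        have ht1 : 1 ≤ t := by
          by_contra h
          have : t = 0 := by omega
          subst this
          simp at hj2
          omega
        have hj2' : j' ≤ 4 ^ (t-1) := by
          have : (4:ℕ) ^ t = 4 * 4 ^ (t-1) := by
            conv_lhs => rw [show t = (t-1)+1 by omega]
            ring
          omega
        have := ih (t-1) j' (by omega) hj'1 hj2'
        rw [r4_rec x, hxmod.1, hxmod.2]
        omega
      · have := ih t j' ht hj'1 (le_trans hj'le hj2)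
        rw [r4_rec x, hxmod.1, hxmod.2]
        omega

lemma r4_le (n : ℕ) (hn : n ≠ 0) : r4 n ≤ 3 * (Nat.log 4 n + 1) := by
  have hlen : (Nat.digits 4 n).length = Nat.log 4 n + 1 := Nat.digits_len 4 n (by norm_num) hn
  have : (Nat.digits 4 n).sum ≤ (Nat.digits 4 n).length • 3 := by
    apply List.sum_le_card_nsmul
    intro x hx
    have := Nat.digits_lt_base (by norm_num) hx
    omega
  rw [hlen] at this
  simpa [r4, Nat.smul_one_eq_cast, mul_comm] using this


def gset (n : ℕ) : Set ℕ := {v | ∃ a : ℕ, v = n.dist a + r4 a}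

noncomputable def gg (n : ℕ) : ℕ := sInf (gset n)

lemma gset_ne (n : ℕ) : (gset n).Nonempty := ⟨n.dist 0 + r4 0, 0, rfl⟩

lemma gg_le (n a : ℕ) : gg n ≤ n.dist a + r4 a := Nat.sInf_le ⟨a, rfl⟩

lemma gg_spec (n : ℕ) : ∃ a : ℕ, gg n = n.dist a + r4 a := Nat.sInf_mem (gset_ne n)

lemma gg_zero : gg 0 = 0 := by
  have h := gg_le 0 0
  simp [Nat.dist_self, r4_zero] at h
  omega

lemma gg_subadd (m n : ℕ) : gg (m + n) ≤ gg m + gg n := by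
  obtain ⟨a, ha⟩ := gg_spec m
  obtain ⟨b, hb⟩ := gg_spec n
  calc gg (m + n) ≤ (m+n).dist (a+b) + r4 (a+b) := gg_le _ _
    _ ≤ m.dist a + n.dist b + (r4 a + r4 b) := by
        have h1 : (m+n).dist (a+b) ≤ (m+n).dist (a+n) + (a+n).dist (a+b) :=
          Nat.dist.triangle_inequality _ _ _
        have h2 : (m+n).dist (a+n) = m.dist a := Nat.dist_add_add_right ..
        have h3 : (a+n).dist (a+b) = n.dist b := by
          simpa [Nat.add_comm] using Nat.dist_add_add_left a n b
        have h4 := r4_subadd a b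
        omega
    _ = gg m + gg n := by omega

lemma gg_lip (a b : ℕ) : gg a ≤ gg b + a.dist b := by
  obtain ⟨c, hc⟩ := gg_spec b
  have h1 : gg a ≤ a.dist c + r4 c := gg_le _ _
  have h2 : a.dist c ≤ a.dist b + b.dist c := Nat.dist.triangle_inequality _ _ _
  omega

lemma gg_le_r4 (n : ℕ) : gg n ≤ r4 n := by
  have := gg_le n n
  simpa [Nat.dist_self] using this

lemma gg_pow (k : ℕ) : gg (4 ^ k) ≤ 1 := by
  simpa [r4_pow] using gg_le_r4 (4 ^ k)

lemma two_le_pow (K : ℕ) : 2 * K ≤ 4 ^ K := by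
  induction K with
  | zero => norm_num
  | succ K ih =>
      have : (4:ℕ) ^ (K+1) = 4 * 4 ^ K := by ring
      have h2 : 1 ≤ 4 ^ K := Nat.one_le_pow _ _ (by norm_num)
      omega

lemma gg_descent (K : ℕ) (hK : 1 ≤ K) : K ≤ gg (4 ^ (4 ^ K) - K) := by
  set m := 4 ^ K with hm
  have hKm : 2 * K ≤ m := two_le_pow K
  have hmk : 1 ≤ K ∧ K ≤ m := ⟨hK, by omega⟩
  apply le_csInf (gset_ne _)
  rintro v ⟨a, rfl⟩
  set n := 4 ^ m - K with hn
  rcases le_or_gt K (n.dist a) with h | h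
  · omega
  · -- a = 4^m - j with 1 ≤ j ≤ 2K-1 ≤ 4^K
    have hp : K < 4 ^ m := by
      calc K < 2 * K + 1 := by omega
        _ ≤ m + 1 := by omega
        _ ≤ 4 ^ m := by
            have := Nat.lt_pow_self (by norm_num : 1 < 4) (n := m)
            omega
    have hd := Nat.dist_eq_sub_of_le (le_refl a)
    have hdist : n.dist a = max n a - min n a := by
      rcases le_total n a with h' | h'
      · rw [Nat.dist_eq_sub_of_le h']; omega
      · rw [Nat.dist_eq_sub_of_le_right h']; omega
    set j := 4 ^ m - a with hj
    have hj1 : 1 ≤ j ∧ j ≤ 2 * K - 1 := by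
      rcases le_total n a with h' | h' <;> omega
    have hj2 : j ≤ 4 ^ K := by omega
    have hr := r4_lb m K j (by omega) hj1.1 hj2
    have ha : a = 4 ^ m - j := by omega
    rw [ha]
    omega



section W
variable (ρ : ℝ)

noncomputable def CC : ℝ := ρ + 1
noncomputable def Om (a : ℕ) : ℝ := ρ ^ a * CC ρ ^ gg a
noncomputable def om (n : ℤ) : ℝ := Om ρ n.toNat * CC ρ ^ (-n).toNat

lemma om_zero : om ρ 0 = 1 := by simp [om, Om, gg_zero]
lemma om_natCast (a : ℕ) : om ρ (a : ℤ) = Om ρ a := by simp [om]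
lemma om_neg_natCast (a : ℕ) : om ρ (-(a : ℤ)) = CC ρ ^ a := by simp [om, Om, gg_zero]

variable (hρ : 1 < ρ)
include hρ

lemma hC1 : 1 < CC ρ := by unfold CC; linarith
lemma hC0 : 0 < CC ρ := lt_trans one_pos (hC1 ρ hρ)
lemma hρ0 : (0:ℝ) < ρ := lt_trans one_pos hρ

lemma Om_one_le (a : ℕ) : 1 ≤ Om ρ a := by
  have h1 : (1:ℝ) ≤ ρ ^ a := one_le_pow₀ hρ.le
  have h2 : (1:ℝ) ≤ CC ρ ^ gg a := one_le_pow₀ (hC1 ρ hρ).le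
  unfold Om; nlinarith

lemma om_one_le (n : ℤ) : 1 ≤ om ρ n := by
  have h1 := Om_one_le ρ hρ n.toNat
  have h2 : (1:ℝ) ≤ CC ρ ^ (-n).toNat := one_le_pow₀ (hC1 ρ hρ).le
  unfold om; nlinarith

lemma Om_subadd (a b : ℕ) : Om ρ (a + b) ≤ Om ρ a * Om ρ b := by
  have h1 : CC ρ ^ gg (a+b) ≤ CC ρ ^ (gg a + gg b) :=
    pow_le_pow_right₀ (hC1 ρ hρ).le (gg_subadd a b)
  have h2 : (0:ℝ) < ρ ^ (a+b) := pow_pos (hρ0 ρ hρ) _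
  calc Om ρ (a+b) = ρ ^ (a+b) * CC ρ ^ gg (a+b) := rfl
    _ ≤ ρ ^ (a+b) * CC ρ ^ (gg a + gg b) := by nlinarith
    _ = Om ρ a * Om ρ b := by simp [Om, pow_add]; ring

lemma Om_sub (a b : ℕ) (hba : b ≤ a) : Om ρ (a - b) ≤ Om ρ a * CC ρ ^ b := by
  have h1 : gg (a - b) ≤ gg a + b := by
    have := gg_lip (a - b) a
    have hd : (a-b).dist a = b := by
      rw [Nat.dist_eq_sub_of_le (by omega)]; omega
    omega
  have h2 : CC ρ ^ gg (a-b) ≤ CC ρ ^ (gg a + b) :=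
    pow_le_pow_right₀ (hC1 ρ hρ).le h1
  have h3 : ρ ^ (a - b) ≤ ρ ^ a := pow_le_pow_right₀ hρ.le (by omega)
  calc Om ρ (a-b) = ρ ^ (a-b) * CC ρ ^ gg (a-b) := rfl
    _ ≤ ρ ^ a * CC ρ ^ (gg a + b) :=
        mul_le_mul h3 h2 (pow_pos (hC0 ρ hρ) _).le (pow_pos (hρ0 ρ hρ) _).le
    _ = Om ρ a * CC ρ ^ b := by simp [Om, pow_add]; ring

lemma om_submul (m n : ℤ) : om ρ (m + n) ≤ om ρ m * om ρ n := by
  have key : ∀ m n : ℤ, 0 ≤ m → om ρ (m + n) ≤ om ρ m * om ρ n := by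
    intro m n hm
    obtain ⟨a, rfl⟩ := Int.eq_ofNat_of_zero_le hm
    rcases le_or_gt 0 n with hn | hn
    · obtain ⟨b, rfl⟩ := Int.eq_ofNat_of_zero_le hn
      rw [← Nat.cast_add, om_natCast, om_natCast, om_natCast]
      exact Om_subadd ρ hρ a b
    · obtain ⟨b, rfl⟩ : ∃ b : ℕ, n = -(b:ℤ) := ⟨(-n).toNat, by omega⟩
      rcases le_or_gt (b:ℤ) (a:ℤ) with hba | hba
      · have hba' : b ≤ a := by exact_mod_cast hba
        have he : (a:ℤ) + -(b:ℤ) = ((a - b : ℕ) : ℤ) := by push_cast [hba']; ring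
        rw [he, om_natCast, om_natCast, om_neg_natCast]
        exact Om_sub ρ hρ a b hba'
      · have hba' : a ≤ b := by omega
        have he : (a:ℤ) + -(b:ℤ) = -((b - a : ℕ) : ℤ) := by push_cast [hba']; ring
        rw [he, om_neg_natCast, om_natCast, om_neg_natCast]
        have h1 : CC ρ ^ (b - a) ≤ CC ρ ^ b := pow_le_pow_right₀ (hC1 ρ hρ).le (by omega)
        have h2 : 1 ≤ Om ρ a := Om_one_le ρ hρ a
        nlinarith [pow_pos (hC0 ρ hρ) b]
  rcases le_or_gt 0 m with hm | hm
  · exact key m n hm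
  rcases le_or_gt 0 n with hn | hn
  · rw [add_comm, mul_comm]; exact key n m hn
  · obtain ⟨a, rfl⟩ : ∃ a : ℕ, m = -(a:ℤ) := ⟨(-m).toNat, by omega⟩
    obtain ⟨b, rfl⟩ : ∃ b : ℕ, n = -(b:ℤ) := ⟨(-n).toNat, by omega⟩
    have he : -(a:ℤ) + -(b:ℤ) = -((a+b : ℕ) : ℤ) := by push_cast; ring
    rw [he, om_neg_natCast, om_neg_natCast, om_neg_natCast, pow_add]



omit hρ in
lemma gg_growth (n : ℕ) (hn : n ≠ 0) : gg n ≤ 3 * (Nat.log 4 n + 1) :=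
  le_trans (gg_le_r4 n) (r4_le n hn)


-- limit of (g n)/n
omit hρ in
lemma gg_div_tendsto : Tendsto (fun n : ℕ => (gg n : ℝ) / n) atTop (nhds 0) := by
  have hlog : Tendsto (fun x : ℝ => Real.log x / x) atTop (nhds 0) := by
    have := Real.tendsto_pow_log_div_mul_add_atTop 1 0 1 one_ne_zero
    simpa using this
  have hup : Tendsto (fun n : ℕ => (3 / Real.log 4) * (Real.log n / n) + 6 / n) atTop (nhds 0) := by
    have h1 : Tendsto (fun n : ℕ => Real.log n / n) atTop (nhds 0) :=
      hlog.comp tendsto_natCast_atTop_atTop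
    have h2 : Tendsto (fun n : ℕ => 6 / (n:ℝ)) atTop (nhds 0) :=
      tendsto_const_nhds.div_atTop tendsto_natCast_atTop_atTop
    have := (h1.const_mul (3 / Real.log 4)).add h2
    simpa using this
  apply squeeze_zero' (g := fun n : ℕ => (3 / Real.log 4) * (Real.log n / n) + 6 / n) ?_ ?_ hup
  · filter_upwards [eventually_ge_atTop 1] with n hn
    positivity
  · filter_upwards [eventually_ge_atTop 1] with n hn
    have hn0 : n ≠ 0 := by omega
    have h1 : (gg n : ℝ) ≤ 3 * (Nat.log 4 n + 1) := by exact_mod_cast gg_growth n hn0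
    have h2 : (Nat.log 4 n : ℝ) ≤ Real.log n / Real.log 4 := by
      have hp : (4:ℕ) ^ Nat.log 4 n ≤ n := Nat.pow_log_le_self 4 hn0
      have hl : Real.log ((4:ℝ) ^ Nat.log 4 n) ≤ Real.log n := by
        apply Real.log_le_log (by positivity)
        exact_mod_cast hp
      rw [Real.log_pow] at hl
      have h4 : (0:ℝ) < Real.log 4 := Real.log_pos (by norm_num)
      exact (le_div_iff₀ h4).mpr hl
    have hn' : (0:ℝ) < n := by exact_mod_cast hn
    rw [div_le_iff₀ hn']
    have h4 : (0:ℝ) < Real.log 4 := Real.log_pos (by norm_num)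
    calc (gg n : ℝ) ≤ 3 * (Nat.log 4 n + 1) := h1
      _ ≤ 3 * (Real.log n / Real.log 4 + 1) := by nlinarith
      _ = (3 / Real.log 4) * Real.log n + 3 := by field_simp
      _ ≤ (3 / Real.log 4) * Real.log n + 6 := by linarith
      _ = ((3 / Real.log 4) * (Real.log n / n) + 6 / n) * n := by field_simp
  
lemma lim_pos : Tendsto (fun n : ℕ => om ρ (n : ℤ) ^ ((1 : ℝ) / n)) atTop (nhds ρ) := by
  have hC := hC1 ρ hρ
  have hC0 : (0:ℝ) < CC ρ := by linarith
  have hρ0 : (0:ℝ) < ρ := by linarith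
  have heq : ∀ᶠ n : ℕ in atTop,
      ρ * CC ρ ^ ((gg n : ℝ) / n) = om ρ (n : ℤ) ^ ((1 : ℝ) / n) := by
    filter_upwards [eventually_ge_atTop 1] with n hn
    have hn0 : (n:ℝ) ≠ 0 := by positivity
    rw [om_natCast]
    unfold Om
    rw [← Real.rpow_natCast ρ n, ← Real.rpow_natCast (CC ρ) (gg n),
      Real.mul_rpow (by positivity) (by positivity),
      ← Real.rpow_mul hρ0.le, ← Real.rpow_mul hC0.le]
    congr 1
    · rw [mul_one_div, div_self hn0, Real.rpow_one]
    · congr 1; field_simp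
  have hmain : Tendsto (fun n : ℕ => ρ * CC ρ ^ ((gg n : ℝ) / n)) atTop (nhds ρ) := by
    have hcont : Tendsto (fun t : ℝ => ρ * CC ρ ^ t) (nhds 0) (nhds ρ) := by
      have : Continuous fun t : ℝ => ρ * CC ρ ^ t := by
        have : Continuous fun t : ℝ => Real.exp (Real.log (CC ρ) * t) := by fun_prop
        have heq2 : (fun t : ℝ => CC ρ ^ t) = fun t => Real.exp (Real.log (CC ρ) * t) := by
          funext t; rw [Real.rpow_def_of_pos hC0]
        continuity
      have h0 := this.tendsto 0
      simpa using h0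
    exact hcont.comp (gg_div_tendsto)
  exact hmain.congr' heq

lemma lim_neg : Tendsto (fun n : ℕ => om ρ (-(n : ℤ)) ^ (-(1 : ℝ) / n)) atTop
    (nhds (CC ρ)⁻¹) := by
  have hC := hC1 ρ hρ
  have hC0 : (0:ℝ) < CC ρ := by linarith
  have hconst : Tendsto (fun _ : ℕ => (CC ρ)⁻¹) atTop (nhds (CC ρ)⁻¹) := tendsto_const_nhds
  apply hconst.congr'
  filter_upwards [eventually_ge_atTop 1] with n hn
  have hn0 : (n:ℝ) ≠ 0 := by positivity
  rw [om_neg_natCast, ← Real.rpow_natCast (CC ρ) n, ← Real.rpow_mul hC0.le]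
  rw [show (n:ℝ) * (-1 / n) = -1 by field_simp]
  rw [Real.rpow_neg_one]


/-- spike positions -/
def pp (K : ℕ) : ℕ := 4 ^ (4 ^ (K+1)) - 1

omit hρ in
lemma pp_succ (K : ℕ) : pp K + 1 = 4 ^ (4 ^ (K+1)) := by
  have : 1 ≤ (4:ℕ) ^ (4 ^ (K+1)) := Nat.one_le_pow _ _ (by norm_num)
  unfold pp; omega

omit hρ in
lemma pp_strictMono : StrictMono pp := by
  apply strictMono_nat_of_lt_succ
  intro K
  have h1 : (4:ℕ) ^ (K+1) < 4 ^ (K+1+1) := Nat.pow_lt_pow_right (by norm_num) (by omega)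
  have h2 : (4:ℕ) ^ (4 ^ (K+1)) < 4 ^ (4 ^ (K+1+1)) := Nat.pow_lt_pow_right (by norm_num) h1
  have : 1 ≤ (4:ℕ) ^ (4 ^ (K+1)) := Nat.one_le_pow _ _ (by norm_num)
  unfold pp; omega

omit hρ in
lemma ppK_big (K : ℕ) : K + 2 ≤ pp K := by
  have h1 : K + 2 ≤ 4 ^ (K+1) := by
    induction K with
    | zero => norm_num
    | succ K ih =>
        have : (4:ℕ) ^ (K+2) = 4 * 4 ^ (K+1) := by ring
        omega
  have h2 : (4:ℕ) ^ (K+1) < 4 ^ (4 ^ (K+1)) :=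
    Nat.lt_pow_self (n := 4 ^ (K+1)) (by norm_num)
  unfold pp; omega

include hρ

lemma not_tp : ¬ TailPreserving (fun n : ℕ => om ρ ((n : ℤ) + 1)) := by
  intro H
  set C := CC ρ with hCdef
  have hC : 1 < C := hC1 ρ hρ
  have hρ0 : (0:ℝ) < ρ := by linarith
  have hC0 : (0:ℝ) < C := by linarith
  have hrc : ρ / C < 1 := (div_lt_one hC0).mpr (by unfold CC; linarith : ρ < CC ρ)
  have hrc0 : 0 < ρ / C := by positivity
  set τ : ℕ → ℝ := fun n => om ρ ((n : ℤ) + 1) with hτdef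
  have hτOm : ∀ n : ℕ, τ n = Om ρ (n+1) := by
    intro n
    have : ((n:ℤ)+1) = ((n+1 : ℕ) : ℤ) := by push_cast; ring
    rw [hτdef]; simp only []
    rw [this, om_natCast]
  have hτ1 : ∀ n, 1 ≤ τ n := fun n => by rw [hτOm]; exact Om_one_le ρ hρ (n+1)
  have hτ0 : ∀ n, 0 < τ n := fun n => lt_of_lt_of_le one_pos (hτ1 n)
  -- the sequence x
  set xr : ℕ → ℝ :=
    Function.extend pp (fun K => (ρ/C)^(K+1) / Om ρ (pp K + 1)) (fun _ => 0) with hxr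
  have hxr_pp : ∀ K, xr (pp K) = (ρ/C)^(K+1) / Om ρ (pp K + 1) := by
    intro K
    rw [hxr]
    exact pp_strictMono.injective.extend_apply _ _ K
  have hxr_off : ∀ n, n ∉ Set.range pp → xr n = 0 := by
    intro n hn
    rw [hxr]
    exact Function.extend_apply' _ _ _ (by simpa [Set.range] using hn)
  have hOm0 : ∀ a, (0:ℝ) < Om ρ a := fun a => lt_of_lt_of_le one_pos (Om_one_le ρ hρ a)
  have hxr_nonneg : ∀ n, 0 ≤ xr n := by
    intro n
    by_cases h : n ∈ Set.range pp
    · obtain ⟨K, rfl⟩ := h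
      rw [hxr_pp]
      exact le_of_lt (div_pos (pow_pos hrc0 _) (hOm0 _))
    · rw [hxr_off n h]
  set x : ℕ → ℂ := fun n => ((xr n : ℝ) : ℂ) with hx
  have hnorm : ∀ n, ‖x n‖ = xr n := by
    intro n
    rw [hx]; simp [Complex.norm_real, abs_of_nonneg (hxr_nonneg n)]
  -- summability of the weighted series
  have hsum : Summable (fun n => τ n * ‖x n‖) := by
    have h0 : ∀ n ∉ Set.range pp, τ n * ‖x n‖ = 0 := by
      intro n hn; rw [hnorm, hxr_off n hn, mul_zero]
    rw [← pp_strictMono.injective.summable_iff h0]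
    have hcomp : (fun n => τ n * ‖x n‖) ∘ pp = fun K => (ρ/C)^(K+1) := by
      funext K
      simp only [Function.comp_apply]
      rw [hnorm, hxr_pp, hτOm, mul_comm, div_mul_cancel₀ _ (ne_of_gt (hOm0 _))]
    rw [hcomp]
    exact ((summable_geometric_of_lt_one hrc0.le hrc).mul_left (ρ/C)).congr
      (fun K => (pow_succ' _ _).symm)
  have S := H x hsum
  -- x is summable
  have hxsum : Summable x := by
    apply Summable.of_norm
    apply Summable.of_nonneg_of_le (fun n => norm_nonneg _) (fun n => ?_) hsum
    rw [hnorm]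
    calc xr n = 1 * xr n := (one_mul _).symm
      _ ≤ τ n * xr n := by
          apply mul_le_mul_of_nonneg_right (hτ1 n) (hxr_nonneg n)
  -- the contradiction positions
  obtain ⟨qq, hqqE⟩ : ∃ qq : ℕ → ℕ, ∀ K, qq K = pp K - (K+1) := ⟨_, fun _ => rfl⟩
  have hqq1 : ∀ K, qq K + 1 + K = pp K := fun K => by
    have h1 := ppK_big K
    have he : qq K + (K+1) = pp K := by
      rw [hqqE]; exact Nat.sub_add_cancel (by omega)
    omega
  have hN : ∀ K, qq K + 1 + (K+1) = 4 ^ (4 ^ (K+1)) := by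
    intro K
    have h1 := pp_succ K
    have h2 := ppK_big K
    have he : qq K + (K+1) = pp K := by
      rw [hqqE]; exact Nat.sub_add_cancel (by omega)
    omega
  have hqq2 : ∀ K, qq K + 1 = 4 ^ (4 ^ (K+1)) - (K+1) := fun K =>
    Nat.eq_sub_of_add_eq (hN K)
  -- lower bound for tail term
  have hterm : ∀ K, 1/C ≤ τ (qq K) * ‖tailFrom x (qq K)‖ := by
    intro K
    have htail : xr (pp K) ≤ ‖tailFrom x (qq K)‖ := by
      have hs : Summable (fun j => xr (qq K + 1 + j)) := by
        have : Summable xr := by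
          have := hxsum.norm
          apply this.congr; intro n; rw [hnorm]
        exact this.comp_injective (add_right_injective _)
      have hre : (tailFrom x (qq K)).re = ∑' j, xr (qq K + 1 + j) := by
        unfold tailFrom
        have hs2 : Summable (fun j : ℕ => x (qq K + 1 + j)) :=
          hxsum.comp_injective (add_right_injective _)
        exact Complex.reCLM.map_tsum hs2
      have hge : xr (pp K) ≤ ∑' j, xr (qq K + 1 + j) := by
        have := Summable.le_tsum hs K (fun j _ => hxr_nonneg _)
        rwa [hqq1 K] at this
      calc xr (pp K) ≤ (tailFrom x (qq K)).re := by rw [hre]; exact hge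
        _ ≤ |(tailFrom x (qq K)).re| := le_abs_self _
        _ ≤ ‖tailFrom x (qq K)‖ := Complex.abs_re_le_norm _
    have hτq : ρ ^ (qq K + 1) * C ^ (K+1) ≤ τ (qq K) := by
      rw [hτOm]
      unfold Om
      apply mul_le_mul_of_nonneg_left _ (by positivity)
      rw [← hCdef]
      have hgd := gg_descent (K+1) (by omega)
      rw [← hqq2 K] at hgd
      exact pow_le_pow_right₀ hC.le hgd
    have hτp : Om ρ (pp K + 1) ≤ ρ ^ (4 ^ (4^(K+1))) * C := by
      rw [pp_succ]
      unfold Om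
      apply mul_le_mul_of_nonneg_left _ (by positivity)
      rw [← hCdef]
      calc C ^ gg (4 ^ (4^(K+1))) ≤ C ^ 1 := pow_le_pow_right₀ hC.le (gg_pow _)
        _ = C := pow_one _
    have hx0 : xr (pp K) = (ρ/C)^(K+1) / Om ρ (pp K + 1) := hxr_pp K
    have hged : (ρ/C)^(K+1) / (ρ ^ (4 ^ (4^(K+1))) * C) ≤ xr (pp K) := by
      rw [hx0]
      apply div_le_div_of_nonneg_left (by positivity) (hOm0 _) hτp
    have hkey : 1/C ≤ (ρ ^ (qq K + 1) * C ^ (K+1)) *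
        ((ρ/C)^(K+1) / (ρ ^ (4 ^ (4^(K+1))) * C)) := by
      rw [← hN K, pow_add ρ (qq K + 1) (K+1), div_pow]
      have hc1 : (C:ℝ) ^ (K+1) ≠ 0 := by positivity
      have hr1 : (ρ:ℝ) ^ (qq K + 1) ≠ 0 := by positivity
      have hr2 : (ρ:ℝ) ^ (K+1) ≠ 0 := by positivity
      apply le_of_eq
      field_simp
    calc 1/C ≤ _ := hkey
      _ ≤ τ (qq K) * xr (pp K) := by
          apply mul_le_mul hτq hged (by positivity) (le_of_lt (hτ0 _))
      _ ≤ τ (qq K) * ‖tailFrom x (qq K)‖ :=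
          mul_le_mul_of_nonneg_left htail (le_of_lt (hτ0 _))
      
  -- contradiction with summability
  have hqq_tend : Tendsto qq atTop atTop := by
    apply tendsto_atTop_mono _ tendsto_id
    intro K
    have hb : 2 * K + 2 ≤ pp K := by
      have g1 : 2 * K + 3 ≤ (4:ℕ)^(K+1) := by
        induction K with
        | zero => norm_num
        | succ K ih =>
            have : (4:ℕ) ^ (K+1+1) = 4 * 4 ^ (K+1) := by ring
            omega
      have h2 : (4:ℕ) ^ (K+1) < 4 ^ (4 ^ (K+1)) :=
        Nat.lt_pow_self (n := 4 ^ (K+1)) (by norm_num)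
      unfold pp
      omega
    have he : qq K + (K+1) = pp K := by
      rw [hqqE]; exact Nat.sub_add_cancel (by omega)
    simp only [id]
    omega
  have hterms := S.tendsto_atTop_zero
  have hsub : Tendsto (fun K => τ (qq K) * ‖tailFrom x (qq K)‖) atTop (nhds 0) :=
    hterms.comp hqq_tend
  have := ge_of_tendsto hsub (Eventually.of_forall hterm)
  have : (0:ℝ) < 1/C := by positivity
  linarith [ge_of_tendsto hsub (Eventually.of_forall hterm)]


end W

end Aux

/-- Lemma 7.6: for every `ρ > 1` there is a weight `ω` on `ℤ` with
`lim_{n→∞} ωₙ^{1/n} = ρ` and `lim_{n→∞} ω₋ₙ^{-1/n} < 1`, but such that the sequence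
`(ωₙ)_{n∈ℕ}` is not tail-preserving. -/
theorem stmt19 (ρ : ℝ) (hρ : 1 < ρ) :
    ∃ ω : ℤ → ℝ, IsWeightInt ω ∧
      Tendsto (fun n : ℕ => ω (n : ℤ) ^ ((1 : ℝ) / n)) atTop (nhds ρ) ∧
      (∃ L : ℝ, L < 1 ∧
        Tendsto (fun n : ℕ => ω (-(n : ℤ)) ^ (-(1 : ℝ) / n)) atTop (nhds L)) ∧
      ¬ TailPreserving (fun n : ℕ => ω ((n : ℤ) + 1)) := by
  refine ⟨om ρ, ⟨om_one_le ρ hρ, om_zero ρ, om_submul ρ hρ⟩, lim_pos ρ hρ, ?_, not_tp ρ hρ⟩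
  refine ⟨(CC ρ)⁻¹, ?_, lim_neg ρ hρ⟩
  have h := hC1 ρ hρ
  have h0 : (0:ℝ) < CC ρ := by linarith
  rw [inv_lt_one_iff₀]
  right; exact h
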